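/- Let ℓ ≥ 2 and k ≥ 3, and let i be a position with i ≠ 0. Consider the graph G obtained from ST^ℓ_k by deleting all vertices of Σ_i and all edges of E_i. Then every connected component of G is isomorphic, as a graph, to the star ℓ-set transposition graph ST^ℓ_{k−1}. -/

import Mathlib

/-- An ℓ-set permutation: a string of length `k * l` over the alphabet `Fin k`
in which every symbol occurs exactly `l` times. -/
abbrev LSetPerm (k l : ℕ) : Type :=
  {v : Fin (k * l) → Fin k // ∀ j : Fin k, (Finset.univ.filter fun x => v x = j).card = l}

/-- The star ℓ-set transposition graph `ST^ℓ_k`: vertices are the ℓ-set permutations,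
with `v` adjacent to `w` iff `w` is obtained from `v` by transposing the first entry
with an entry of differing value. -/
def STGraph (k l : ℕ) [NeZero (k * l)] : SimpleGraph (LSetPerm k l) :=
  SimpleGraph.fromRel fun v w =>
    ∃ h : Fin (k * l), h ≠ 0 ∧ v.1 h ≠ v.1 0 ∧ w.1 = v.1 ∘ (Equiv.swap 0 h)

namespace STAux
open Finset SimpleGraph

variable {k l : ℕ}

/-- Precomposing with a permutation of positions. -/
def permApply (v : LSetPerm k l) (e : Equiv.Perm (Fin (k * l))) : LSetPerm k l :=
  ⟨v.1 ∘ e, by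
    intro j
    refine Eq.trans ?_ (v.2 j)
    exact Finset.card_bij' (fun x _ => e x) (fun y _ => e.symm y)
      (by simp [Function.comp]) (by simp [Function.comp])
      (by simp) (by simp)⟩

@[simp] lemma permApply_apply (v : LSetPerm k l) (e : Equiv.Perm (Fin (k * l))) (x) :
    (permApply v e).1 x = v.1 (e x) := rfl

lemma stgraph_adj [NeZero (k * l)] {v w : LSetPerm k l} :
    (STGraph k l).Adj v w ↔
      ∃ h : Fin (k * l), h ≠ 0 ∧ v.1 h ≠ v.1 0 ∧ w.1 = v.1 ∘ (Equiv.swap 0 h) := by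
  constructor
  · rintro ⟨hne, (⟨h, h0, hv, hw⟩ | ⟨h, h0, hw, hv⟩)⟩
    · exact ⟨h, h0, hv, hw⟩
    · refine ⟨h, h0, ?_, ?_⟩
      · have h1 : v.1 h = w.1 ((Equiv.swap 0 h) h) := by rw [hv]; rfl
        have h2 : v.1 0 = w.1 ((Equiv.swap 0 h) 0) := by rw [hv]; rfl
        simp only [Equiv.swap_apply_right, Equiv.swap_apply_left] at h1 h2
        rw [h1, h2]; exact hw.symm
      · funext x
        rw [hv]
        simp [Function.comp]
  · rintro ⟨h, h0, hv, hw⟩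
    refine ⟨?_, Or.inl ⟨h, h0, hv, hw⟩⟩
    intro he
    apply hv
    have : w.1 0 = v.1 h := by rw [hw]; simp
    rw [← he] at this
    exact this.symm

lemma adj_swap [NeZero (k * l)] (v : LSetPerm k l) {h : Fin (k * l)}
    (h0 : h ≠ 0) (hv : v.1 h ≠ v.1 0) :
    (STGraph k l).Adj v (permApply v (Equiv.swap 0 h)) :=
  stgraph_adj.mpr ⟨h, h0, hv, rfl⟩


lemma permApply_eq_of_funeq (v : LSetPerm k l) (e e' : Equiv.Perm (Fin (k * l)))
    (h : ∀ x, v.1 (e x) = v.1 (e' x)) : permApply v e = permApply v e' :=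
  Subtype.ext (funext h)

lemma reachable_swap [NeZero (k * l)] (v : LSetPerm k l) {a b : Fin (k * l)}
    (hab : a ≠ b) (hv : v.1 a ≠ v.1 b) :
    (STGraph k l).Reachable v (permApply v (Equiv.swap a b)) := by
  rcases eq_or_ne a 0 with rfl | ha0
  · exact (adj_swap v (Ne.symm hab) (Ne.symm hv)).reachable
  rcases eq_or_ne b 0 with rfl | hb0
  · rw [Equiv.swap_comm]
    exact (adj_swap v hab hv).reachable
  rcases eq_or_ne (v.1 0) (v.1 a) with h0a | h0a
  · -- two steps: swap 0 b then swap 0 a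
    have h0b : v.1 b ≠ v.1 0 := by rw [h0a]; exact Ne.symm hv
    set v1 := permApply v (Equiv.swap 0 b) with hv1
    have step1 : (STGraph k l).Adj v v1 := adj_swap v hb0 h0b
    have hv1a : v1.1 a ≠ v1.1 0 := by
      simp only [hv1, permApply_apply, Equiv.swap_apply_left,
        Equiv.swap_apply_of_ne_of_ne ha0 hab]
      exact hv
    have key : permApply v1 (Equiv.swap 0 a) = permApply v (Equiv.swap a b) := by
      apply Subtype.ext; funext x
      show v.1 (Equiv.swap 0 b (Equiv.swap 0 a x)) = v.1 (Equiv.swap a b x)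
      rcases eq_or_ne x 0 with rfl | hx0
      · rw [Equiv.swap_apply_left, Equiv.swap_apply_of_ne_of_ne ha0 hab,
          Equiv.swap_apply_of_ne_of_ne (Ne.symm ha0) (Ne.symm hb0)]
        exact h0a.symm
      rcases eq_or_ne x a with rfl | hxa
      · rw [Equiv.swap_apply_right, Equiv.swap_apply_left, Equiv.swap_apply_left]
      rcases eq_or_ne x b with rfl | hxb
      · rw [Equiv.swap_apply_of_ne_of_ne hb0 (Ne.symm hab), Equiv.swap_apply_right,
          Equiv.swap_apply_right]
        exact h0a
      · rw [Equiv.swap_apply_of_ne_of_ne hx0 hxa, Equiv.swap_apply_of_ne_of_ne hx0 hxb,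
          Equiv.swap_apply_of_ne_of_ne hxa hxb]
    exact step1.reachable.trans (key ▸ (adj_swap v1 ha0 hv1a).reachable)
  rcases eq_or_ne (v.1 0) (v.1 b) with h0b | h0b
  · -- two steps: swap 0 a then swap 0 b
    have h0a' : v.1 a ≠ v.1 0 := fun h => hv (h.trans h0b)
    set v1 := permApply v (Equiv.swap 0 a) with hv1
    have step1 : (STGraph k l).Adj v v1 := adj_swap v ha0 h0a'
    have hv1b : v1.1 b ≠ v1.1 0 := by
      simp only [hv1, permApply_apply, Equiv.swap_apply_left,
        Equiv.swap_apply_of_ne_of_ne hb0 (Ne.symm hab)]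
      exact Ne.symm hv
    have key : permApply v1 (Equiv.swap 0 b) = permApply v (Equiv.swap a b) := by
      apply Subtype.ext; funext x
      show v.1 (Equiv.swap 0 a (Equiv.swap 0 b x)) = v.1 (Equiv.swap a b x)
      rcases eq_or_ne x 0 with rfl | hx0
      · rw [Equiv.swap_apply_left, Equiv.swap_apply_of_ne_of_ne hb0 (Ne.symm hab),
          Equiv.swap_apply_of_ne_of_ne (Ne.symm ha0) (Ne.symm hb0)]
        exact h0b.symm
      rcases eq_or_ne x a with rfl | hxa
      · rw [Equiv.swap_apply_of_ne_of_ne ha0 hab, Equiv.swap_apply_right,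
          Equiv.swap_apply_left]
        exact h0b
      rcases eq_or_ne x b with rfl | hxb
      · rw [Equiv.swap_apply_right, Equiv.swap_apply_left, Equiv.swap_apply_right]
      · rw [Equiv.swap_apply_of_ne_of_ne hx0 hxb, Equiv.swap_apply_of_ne_of_ne hx0 hxa,
          Equiv.swap_apply_of_ne_of_ne hxa hxb]
    exact step1.reachable.trans (key ▸ (adj_swap v1 hb0 hv1b).reachable)
  · -- three steps
    have h0a' : v.1 a ≠ v.1 0 := Ne.symm h0a
    set v1 := permApply v (Equiv.swap 0 a) with hv1
    have step1 : (STGraph k l).Adj v v1 := adj_swap v ha0 h0a'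
    have hv1b : v1.1 b ≠ v1.1 0 := by
      simp only [hv1, permApply_apply, Equiv.swap_apply_left,
        Equiv.swap_apply_of_ne_of_ne hb0 (Ne.symm hab)]
      exact Ne.symm hv
    set v2 := permApply v1 (Equiv.swap 0 b) with hv2
    have step2 : (STGraph k l).Adj v1 v2 := adj_swap v1 hb0 hv1b
    have hv2a : v2.1 a ≠ v2.1 0 := by
      show v.1 (Equiv.swap 0 a (Equiv.swap 0 b a)) ≠ v.1 (Equiv.swap 0 a (Equiv.swap 0 b 0))
      rw [Equiv.swap_apply_of_ne_of_ne ha0 hab, Equiv.swap_apply_right,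
        Equiv.swap_apply_left]
      rw [Equiv.swap_apply_of_ne_of_ne hb0 (Ne.symm hab)]
      exact h0b
    have key : permApply v2 (Equiv.swap 0 a) = permApply v (Equiv.swap a b) := by
      apply Subtype.ext; funext x
      show v.1 (Equiv.swap 0 a (Equiv.swap 0 b (Equiv.swap 0 a x))) = v.1 (Equiv.swap a b x)
      rcases eq_or_ne x 0 with rfl | hx0
      · rw [Equiv.swap_apply_left, Equiv.swap_apply_of_ne_of_ne ha0 hab,
          Equiv.swap_apply_right, Equiv.swap_apply_of_ne_of_ne (Ne.symm ha0) (Ne.symm hb0)]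
      rcases eq_or_ne x a with rfl | hxa
      · rw [Equiv.swap_apply_right, Equiv.swap_apply_left,
          Equiv.swap_apply_of_ne_of_ne hb0 (Ne.symm hab), Equiv.swap_apply_left]
      rcases eq_or_ne x b with rfl | hxb
      · rw [Equiv.swap_apply_of_ne_of_ne hb0 (Ne.symm hab), Equiv.swap_apply_right,
          Equiv.swap_apply_left, Equiv.swap_apply_right]
      · rw [Equiv.swap_apply_of_ne_of_ne hx0 hxa, Equiv.swap_apply_of_ne_of_ne hx0 hxb,
          Equiv.swap_apply_of_ne_of_ne hx0 hxa, Equiv.swap_apply_of_ne_of_ne hxa hxb]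
    exact step1.reachable.trans (step2.reachable.trans
      (key ▸ (adj_swap v2 ha0 hv2a).reachable))


lemma st_preconnected [NeZero (k * l)] : (STGraph k l).Preconnected := by
  intro v w
  generalize hn : (Finset.univ.filter fun x => v.1 x ≠ w.1 x).card = n
  induction n using Nat.strong_induction_on generalizing v with
  | _ n ih =>
    rcases Nat.eq_zero_or_pos n with rfl | hpos
    · have : v = w := by
        apply Subtype.ext; funext x
        by_contra hx
        have : x ∈ Finset.univ.filter fun x => v.1 x ≠ w.1 x := by
          simp [hx]
        rw [Finset.card_eq_zero.mp hn] at this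
        simp at this
      exact this ▸ Reachable.refl _
    · -- there is a mismatch position a
      obtain ⟨a, ha⟩ : ∃ a, v.1 a ≠ w.1 a := by
        by_contra hno
        push_neg at hno
        rw [Finset.card_eq_zero.mpr (by simp [hno])] at hn
        omega
      -- find b with v b = w a and w b ≠ v b
      obtain ⟨b, hb1, hb2⟩ : ∃ b, v.1 b = w.1 a ∧ w.1 b ≠ v.1 b := by
        by_contra hno
        push_neg at hno
        have hsub : (Finset.univ.filter fun x => v.1 x = w.1 a) ⊆
            (Finset.univ.filter fun x => w.1 x = w.1 a) := by
          intro x hx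
          simp only [Finset.mem_filter, Finset.mem_univ, true_and] at hx ⊢
          rw [← hx]
          exact hno x hx
        have heq := Finset.eq_of_subset_of_card_le hsub
          (le_of_eq ((w.2 (w.1 a)).trans (v.2 (w.1 a)).symm))
        have : a ∈ Finset.univ.filter fun x => v.1 x = w.1 a := by
          rw [heq]; simp
        simp only [Finset.mem_filter, Finset.mem_univ, true_and] at this
        exact ha this
      have hab : a ≠ b := fun h => ha (h ▸ hb1)
      have hvab : v.1 a ≠ v.1 b := fun h => ha (h.trans hb1)
      set v' := permApply v (Equiv.swap a b) with hv'
      have hr1 : (STGraph k l).Reachable v v' := reachable_swap v hab hvab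
      -- mismatch set of v' is strictly smaller
      have hsub : (Finset.univ.filter fun x => v'.1 x ≠ w.1 x) ⊂
          (Finset.univ.filter fun x => v.1 x ≠ w.1 x) := by
        constructor
        · intro x hx
          simp only [Finset.mem_filter, Finset.mem_univ, true_and, hv',
            permApply_apply] at hx ⊢
          rcases eq_or_ne x a with rfl | hxa
          · exact ha
          rcases eq_or_ne x b with rfl | hxb
          · exact Ne.symm hb2
          · rw [Equiv.swap_apply_of_ne_of_ne hxa hxb] at hx
            exact hx
        · intro hsup
          have hmem : a ∈ Finset.univ.filter fun x => v.1 x ≠ w.1 x := by simp [ha]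
          have := hsup hmem
          simp only [Finset.mem_filter, Finset.mem_univ, true_and, hv',
            permApply_apply, Equiv.swap_apply_left] at this
          exact this hb1
      have hcard := Finset.card_lt_card hsub
      rw [hn] at hcard
      exact hr1.trans (ih _ hcard v' rfl)


section Main

variable (k l : ℕ) [NeZero (k * l)] (i : Fin (k * l))

abbrev Edel : Set (Sym2 (LSetPerm k l)) :=
  {e | ∃ v w : LSetPerm k l, e = s(v, w) ∧ v.1 i ≠ v.1 0 ∧ w.1 = v.1 ∘ Equiv.swap 0 i}

abbrev Vset : Set (LSetPerm k l) := {v : LSetPerm k l | v.1 i ≠ v.1 0}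

abbrev Gdel : SimpleGraph (Vset k l i) :=
  ((STGraph k l).deleteEdges (Edel k l i)).induce (Vset k l i)

variable {k l i}

lemma gdel_adj (hi : i ≠ 0) (u w : Vset k l i) :
    (Gdel k l i).Adj u w ↔
      ∃ h : Fin (k * l), h ≠ 0 ∧ h ≠ i ∧ u.1.1 h ≠ u.1.1 0 ∧
        w.1.1 = u.1.1 ∘ Equiv.swap 0 h := by
  have hbase : (Gdel k l i).Adj u w ↔
      (STGraph k l).Adj u.1 w.1 ∧ s(u.1, w.1) ∉ Edel k l i :=
    SimpleGraph.deleteEdges_adj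
  rw [hbase, stgraph_adj]
  constructor
  · rintro ⟨⟨h, h0, hne, hw⟩, hE⟩
    refine ⟨h, h0, ?_, hne, hw⟩
    rintro rfl
    exact hE ⟨u.1, w.1, rfl, hne, hw⟩
  · rintro ⟨h, h0, hhi, hne, hw⟩
    refine ⟨⟨h, h0, hne, hw⟩, ?_⟩
    rintro ⟨p, q, heq, hpi, hq⟩
    rw [Sym2.eq_iff] at heq
    rcases heq with ⟨hup, hwq⟩ | ⟨huq, hwp⟩
    · have hwi : w.1.1 i = u.1.1 i := by
        rw [hw]
        show u.1.1 (Equiv.swap 0 h i) = u.1.1 i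
        rw [Equiv.swap_apply_of_ne_of_ne hi (Ne.symm hhi)]
      have hwi' : w.1.1 i = u.1.1 0 := by
        rw [hwq, hq, ← hup]
        show u.1.1 (Equiv.swap 0 i i) = u.1.1 0
        rw [Equiv.swap_apply_right]
      exact u.2 (hwi.symm.trans hwi')
    · have h2 : w.1.1 i = u.1.1 i := by
        rw [hw]
        show u.1.1 (Equiv.swap 0 h i) = u.1.1 i
        rw [Equiv.swap_apply_of_ne_of_ne hi (Ne.symm hhi)]
      have h1 : u.1.1 0 = w.1.1 i := by
        rw [huq, hq, ← hwp]
        show w.1.1 (Equiv.swap 0 i 0) = w.1.1 i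
        rw [Equiv.swap_apply_left]
      exact u.2 (h1.trans h2).symm


section Component

variable [NeZero ((k - 1) * l)]

/-- Relabelling of the alphabet omitting `j`. -/
def dEquiv (hk : 3 ≤ k) (j : Fin k) : Fin (k - 1) ≃ {m : Fin k // m ≠ j} := by
  have hk1 : k - 1 + 1 = k := by omega
  exact (finSuccAboveEquiv (Fin.cast hk1.symm j)).trans
    ((finCongr hk1).subtypeEquiv (fun x => by
      constructor
      · intro hx hj
        apply hx
        apply (finCongr hk1).injective
        rw [hj]
        rfl
      · intro hx hj
        apply hx
        rw [hj]
        rfl))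

lemma dEquiv_ne (hk : 3 ≤ k) (j : Fin k) (x : Fin (k - 1)) : ((dEquiv hk j) x).1 ≠ j :=
  ((dEquiv hk j) x).2

lemma card_ne_val (v : LSetPerm k l) (j : Fin k) (hk : 3 ≤ k) :
    Fintype.card {x : Fin (k * l) // v.1 x ≠ j} = (k - 1) * l := by
  rw [Fintype.card_subtype]
  have h1 : (Finset.univ.filter fun x => ¬(v.1 x = j)) =
      Finset.univ \ (Finset.univ.filter fun x => v.1 x = j) := by
    rw [Finset.filter_not]
  rw [h1, Finset.card_sdiff_of_subset (Finset.filter_subset _ _), v.2 j, Finset.card_univ,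
    Fintype.card_fin, Nat.sub_mul, one_mul]

/-- Relabelling of the positions omitting the positions of the symbol `v0 i`,
sending `0` to `0`. -/
noncomputable def posEquiv (hk : 3 ≤ k) (v0 : Vset k l i) :
    Fin ((k - 1) * l) ≃ {x : Fin (k * l) // v0.1.1 x ≠ v0.1.1 i} :=
  let f := Fintype.equivFinOfCardEq (card_ne_val v0.1 (v0.1.1 i) hk)
  (Equiv.swap 0 (f ⟨0, Ne.symm v0.2⟩)).trans f.symm

lemma posEquiv_zero (hk : 3 ≤ k) (v0 : Vset k l i) :
    posEquiv hk v0 0 = ⟨0, Ne.symm v0.2⟩ := by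
  simp [posEquiv]

/-- The vertices with the same positions of the symbol `v0 i` as `v0`. -/
def Tset (v0 : Vset k l i) : Set (Vset k l i) :=
  {u | ∀ x, u.1.1 x = v0.1.1 i ↔ v0.1.1 x = v0.1.1 i}

lemma v0_mem_Tset (v0 : Vset k l i) : v0 ∈ Tset v0 := fun _ => Iff.rfl

lemma Tset_closed (hi : i ≠ 0) (v0 : Vset k l i) {u w : Vset k l i}
    (hu : u ∈ Tset v0) (huw : (Gdel k l i).Adj u w) : w ∈ Tset v0 := by
  obtain ⟨h, h0, hhi, hne, hw⟩ := (gdel_adj hi u w).mp huw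
  have hui : u.1.1 i = v0.1.1 i := (hu i).mpr rfl
  have hwi : w.1.1 i = u.1.1 i := by
    rw [hw]
    show u.1.1 (Equiv.swap 0 h i) = u.1.1 i
    rw [Equiv.swap_apply_of_ne_of_ne hi (Ne.symm hhi)]
  have hw0 : w.1.1 0 = u.1.1 h := by
    rw [hw]
    show u.1.1 (Equiv.swap 0 h 0) = u.1.1 h
    rw [Equiv.swap_apply_left]
  have hwh : w.1.1 h = u.1.1 0 := by
    rw [hw]
    show u.1.1 (Equiv.swap 0 h h) = u.1.1 0
    rw [Equiv.swap_apply_right]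
  have huh : u.1.1 h ≠ v0.1.1 i := by
    intro hcon
    apply w.2
    rw [hwi, hui, hw0, hcon]
  have hu0 : u.1.1 0 ≠ v0.1.1 i := fun hc => (Ne.symm v0.2) ((hu 0).mp hc)
  intro x
  rcases eq_or_ne x 0 with rfl | hx0
  · rw [hw0]
    constructor
    · intro hc; exact absurd hc huh
    · intro hc; exact absurd hc (Ne.symm v0.2)
  rcases eq_or_ne x h with rfl | hxh
  · rw [hwh]
    constructor
    · intro hc; exact absurd hc hu0
    · intro hc; exact absurd hc (fun h2 => huh ((hu x).mpr hc))
  · have : w.1.1 x = u.1.1 x := by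
      rw [hw]
      show u.1.1 (Equiv.swap 0 h x) = u.1.1 x
      rw [Equiv.swap_apply_of_ne_of_ne hx0 hxh]
    rw [this]
    exact hu x

lemma supp_subset_Tset (hi : i ≠ 0) (v0 : Vset k l i) :
    ((Gdel k l i).connectedComponentMk v0).supp ⊆ Tset v0 := by
  intro u hu
  rw [SimpleGraph.ConnectedComponent.mem_supp_iff] at hu
  have hreach : (Gdel k l i).Reachable v0 u :=
    ((SimpleGraph.ConnectedComponent.eq).mp hu).symm
  obtain ⟨p⟩ := hreach
  clear hu
  have key : ∀ {a b : Vset k l i}, (Gdel k l i).Walk a b → a ∈ Tset v0 → b ∈ Tset v0 := by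
    intro a b p
    induction p with
    | nil => exact id
    | cons hadj _ ih => exact fun ha => ih (Tset_closed hi v0 ha hadj)
  exact key p (v0_mem_Tset v0)


/-- Forward map: restrict a vertex of the component to the positions not holding `v0 i`. -/
noncomputable def phiFun (hk : 3 ≤ k) (v0 : Vset k l i) (u : ↥(Tset v0)) :
    LSetPerm (k - 1) l := by
  refine ⟨fun x => (dEquiv hk (v0.1.1 i)).symm
    ⟨u.1.1.1 (posEquiv hk v0 x).1, fun hc => (posEquiv hk v0 x).2 ((u.2 _).mp hc)⟩, ?_⟩
  intro j'
  refine Eq.trans ?_ (u.1.1.2 ((dEquiv hk (v0.1.1 i)) j').1)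
  refine Finset.card_bij' (fun x _ => (posEquiv hk v0 x).1)
    (fun y hy => (posEquiv hk v0).symm ⟨y, ?_⟩) ?_ ?_ ?_ ?_
  · simp only [Finset.mem_filter, Finset.mem_univ, true_and] at hy
    intro hc
    apply dEquiv_ne hk (v0.1.1 i) j'
    rw [← hy]
    exact (u.2 y).mpr hc
  · intro a ha
    simp only [Finset.mem_filter, Finset.mem_univ, true_and] at ha ⊢
    have := congrArg (dEquiv hk (v0.1.1 i)) ha
    rw [Equiv.apply_symm_apply] at this
    exact congrArg Subtype.val this
  · intro y hy
    simp only [Finset.mem_filter, Finset.mem_univ, true_and] at hy ⊢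
    rw [Equiv.symm_apply_eq]
    apply Subtype.ext
    show u.1.1.1 ((posEquiv hk v0) ((posEquiv hk v0).symm _)).1 = _
    rw [Equiv.apply_symm_apply]
    exact hy
  · intro a ha
    simp only [Subtype.coe_eta, Equiv.symm_apply_apply]
  · intro y hy
    simp only [Equiv.apply_symm_apply]

/-- Inverse map. -/
noncomputable def psiFun (hk : 3 ≤ k) (v0 : Vset k l i) (w : LSetPerm (k - 1) l) :
    Fin (k * l) → Fin k := fun y =>
  if h : v0.1.1 y = v0.1.1 i then v0.1.1 i
  else ((dEquiv hk (v0.1.1 i)) (w.1 ((posEquiv hk v0).symm ⟨y, h⟩))).1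

lemma psiFun_count (hk : 3 ≤ k) (v0 : Vset k l i) (w : LSetPerm (k - 1) l)
    (j'' : Fin k) :
    (Finset.univ.filter fun y => psiFun hk v0 w y = j'').card = l := by
  rcases eq_or_ne j'' (v0.1.1 i) with rfl | hne
  · have hset : (Finset.univ.filter fun y => psiFun hk v0 w y = v0.1.1 i) =
        (Finset.univ.filter fun y => v0.1.1 y = v0.1.1 i) := by
      apply Finset.ext
      intro y
      simp only [Finset.mem_filter, Finset.mem_univ, true_and]; simp only [psiFun]
      constructor
      · intro hy
        by_contra hc
        rw [dif_neg hc] at hy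
        exact dEquiv_ne hk (v0.1.1 i) _ hy
      · intro hy
        rw [dif_pos hy]
    rw [hset]
    exact v0.1.2 (v0.1.1 i)
  · refine Eq.trans ?_ (w.2 ((dEquiv hk (v0.1.1 i)).symm ⟨j'', hne⟩))
    have hd : ((dEquiv hk (v0.1.1 i)) ((dEquiv hk (v0.1.1 i)).symm ⟨j'', hne⟩)).1 = j'' := by
      rw [Equiv.apply_symm_apply]
    refine Finset.card_bij' (fun y hy => (posEquiv hk v0).symm ⟨y, ?_⟩)
      (fun x _ => ((posEquiv hk v0) x).1) ?_ ?_ ?_ ?_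
    · simp only [Finset.mem_filter, Finset.mem_univ, true_and] at hy; simp only [psiFun] at hy
      intro hc
      rw [dif_pos hc] at hy
      exact hne hy.symm
    · intro y hy
      simp only [Finset.mem_filter, Finset.mem_univ, true_and] at hy ⊢; simp only [psiFun] at hy ⊢
      by_cases hc : v0.1.1 y = v0.1.1 i
      · rw [dif_pos hc] at hy; exact absurd hy.symm hne
      · rw [dif_neg hc] at hy
        rw [Equiv.eq_symm_apply]
        apply Subtype.ext
        exact hy
    · intro x hx
      simp only [Finset.mem_filter, Finset.mem_univ, true_and] at hx ⊢; simp only [psiFun] at hx ⊢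
      rw [dif_neg ((posEquiv hk v0) x).2, Subtype.coe_eta, Equiv.symm_apply_apply, hx, hd]
    · intro y hy
      simp only [Equiv.apply_symm_apply]
    · intro x hx
      simp only [Subtype.coe_eta, Equiv.symm_apply_apply]

lemma psiFun_vmem (hk : 3 ≤ k) (v0 : Vset k l i) (w : LSetPerm (k - 1) l) :
    psiFun hk v0 w i ≠ psiFun hk v0 w 0 := by
  have h1 : psiFun hk v0 w i = v0.1.1 i := by rw [psiFun, dif_pos rfl]
  have h2 : psiFun hk v0 w 0 ≠ v0.1.1 i := by
    rw [psiFun, dif_neg (Ne.symm v0.2)]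
    exact dEquiv_ne hk (v0.1.1 i) _
  rw [h1]
  exact Ne.symm h2

lemma psiFun_tmem (hk : 3 ≤ k) (v0 : Vset k l i) (w : LSetPerm (k - 1) l) (x : Fin (k * l)) :
    psiFun hk v0 w x = v0.1.1 i ↔ v0.1.1 x = v0.1.1 i := by
  by_cases hc : v0.1.1 x = v0.1.1 i
  · rw [psiFun, dif_pos hc]
    simp [hc]
  · rw [psiFun, dif_neg hc]
    simp only [hc, iff_false]
    exact dEquiv_ne hk (v0.1.1 i) _

/-- The main equivalence between a component and the smaller set of ℓ-set permutations. -/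
noncomputable def tsetEquiv (hk : 3 ≤ k) (v0 : Vset k l i) :
    ↥(Tset v0) ≃ LSetPerm (k - 1) l where
  toFun := phiFun hk v0
  invFun w := ⟨⟨⟨psiFun hk v0 w, psiFun_count hk v0 w⟩, psiFun_vmem hk v0 w⟩,
    fun x => psiFun_tmem hk v0 w x⟩
  left_inv u := by
    apply Subtype.ext; apply Subtype.ext; apply Subtype.ext
    funext y
    show psiFun hk v0 (phiFun hk v0 u) y = u.1.1.1 y
    rcases eq_or_ne (v0.1.1 y) (v0.1.1 i) with hc | hc
    · rw [psiFun, dif_pos hc]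
      exact ((u.2 y).mpr hc).symm
    · rw [psiFun, dif_neg hc]
      show ((dEquiv hk (v0.1.1 i)) ((dEquiv hk (v0.1.1 i)).symm _)).1 = _
      rw [Equiv.apply_symm_apply]
      have : (posEquiv hk v0) ((posEquiv hk v0).symm ⟨y, hc⟩) = ⟨y, hc⟩ :=
        Equiv.apply_symm_apply _ _
      simp only [this]
  right_inv w := by
    apply Subtype.ext
    funext x
    show (dEquiv hk (v0.1.1 i)).symm ⟨psiFun hk v0 w ((posEquiv hk v0) x).1, _⟩ = w.1 x
    rw [Equiv.symm_apply_eq]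
    apply Subtype.ext
    show psiFun hk v0 w ((posEquiv hk v0) x).1 = _
    rw [psiFun, dif_neg ((posEquiv hk v0) x).2, Subtype.coe_eta, Equiv.symm_apply_apply]


lemma posEquiv_val_ne_zero (hk : 3 ≤ k) (v0 : Vset k l i) {x : Fin ((k - 1) * l)}
    (hx : x ≠ 0) : ((posEquiv hk v0) x).1 ≠ 0 := by
  intro hc
  apply hx
  apply (posEquiv hk v0).injective
  rw [posEquiv_zero]
  exact Subtype.ext hc

lemma posEquiv_swap (hk : 3 ≤ k) (v0 : Vset k l i) (h' x : Fin ((k - 1) * l))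
    (hh : h' ≠ 0) :
    (Equiv.swap 0 ((posEquiv hk v0) h').1) ((posEquiv hk v0 x).1) =
      ((posEquiv hk v0) (Equiv.swap 0 h' x)).1 := by
  rcases eq_or_ne x 0 with rfl | hx0
  · rw [Equiv.swap_apply_left]
    have h1 : ((posEquiv hk v0) 0).1 = 0 := by rw [posEquiv_zero]
    rw [h1, Equiv.swap_apply_left]
  rcases eq_or_ne x h' with rfl | hxh
  · rw [Equiv.swap_apply_right, Equiv.swap_apply_right]
    rw [posEquiv_zero]
  · rw [Equiv.swap_apply_of_ne_of_ne (posEquiv_val_ne_zero hk v0 hx0)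
      (fun hc => hxh ((posEquiv hk v0).injective (Subtype.ext hc))),
      Equiv.swap_apply_of_ne_of_ne hx0 hxh]

lemma tsetEquiv_adj (hk : 3 ≤ k) (hi : i ≠ 0) (v0 : Vset k l i) (a b : ↥(Tset v0)) :
    (Gdel k l i).Adj a.1 b.1 ↔
      (STGraph (k - 1) l).Adj (tsetEquiv hk v0 a) (tsetEquiv hk v0 b) := by
  set jv := v0.1.1 i with hjv
  set d := dEquiv hk jv with hd
  set e := posEquiv hk v0 with he
  have he0 : (e 0).1 = 0 := by rw [he, posEquiv_zero]
  have phiv : ∀ (u : ↥(Tset v0)) (x : Fin ((k - 1) * l)),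
      ((tsetEquiv hk v0 u).1 x) = (d.symm ⟨u.1.1.1 (e x).1,
        fun hc => (e x).2 ((u.2 _).mp hc)⟩) := fun u x => rfl
  constructor
  · intro hadj
    obtain ⟨h, h0, hhi, hne, hw⟩ := (gdel_adj hi a.1 b.1).mp hadj
    have hbh : b.1.1.1 0 = a.1.1.1 h := by
      rw [hw]
      show a.1.1.1 (Equiv.swap 0 h 0) = _
      rw [Equiv.swap_apply_left]
    have hbi : b.1.1.1 i = a.1.1.1 i := by
      rw [hw]
      show a.1.1.1 (Equiv.swap 0 h i) = _
      rw [Equiv.swap_apply_of_ne_of_ne hi (Ne.symm hhi)]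
    have hai : a.1.1.1 i = jv := (a.2 i).mpr rfl
    have hah : a.1.1.1 h ≠ jv := by
      intro hc
      apply b.1.2
      rw [hbi, hai, hbh, hc]
    have hv0h : v0.1.1 h ≠ jv := fun hc => hah ((a.2 h).mpr hc)
    set h' := e.symm ⟨h, hv0h⟩ with hh'
    have heh' : (e h').1 = h := by rw [hh', Equiv.apply_symm_apply]
    have hne' : h' ≠ 0 := by
      intro hc
      apply h0
      rw [← heh', hc, he0]
    rw [stgraph_adj]
    refine ⟨h', hne', ?_, ?_⟩
    · rw [phiv a h', phiv a 0]
      intro hc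
      apply hne
      have h2 := congrArg d hc
      simp only [Equiv.apply_symm_apply] at h2
      have h3 := congrArg Subtype.val h2
      simp only [he0] at h3
      rw [heh'] at h3
      exact h3
    · funext x
      show (tsetEquiv hk v0 b).1 x = (tsetEquiv hk v0 a).1 (Equiv.swap 0 h' x)
      rw [phiv b x, phiv a (Equiv.swap 0 h' x)]
      apply congrArg
      apply Subtype.ext
      show b.1.1.1 (e x).1 = a.1.1.1 (e (Equiv.swap 0 h' x)).1
      rw [hw]
      show a.1.1.1 (Equiv.swap 0 h (e x).1) = _
      rw [← heh', posEquiv_swap hk v0 h' x hne']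
  · intro hadj
    obtain ⟨h', hne', hvne, hfeq⟩ := stgraph_adj.mp hadj
    set h := (e h').1 with hh
    have hv0h : v0.1.1 h ≠ jv := (e h').2
    have h0 : h ≠ 0 := posEquiv_val_ne_zero hk v0 hne'
    have hhi : h ≠ i := by
      intro hc
      apply hv0h
      rw [hc]
    have hane : a.1.1.1 h ≠ a.1.1.1 0 := by
      intro hc
      apply hvne
      rw [phiv a h', phiv a 0]
      apply congrArg
      apply Subtype.ext
      show a.1.1.1 (e h').1 = a.1.1.1 (e 0).1
      rw [he0, ← hh]
      exact hc
    rw [gdel_adj hi]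
    refine ⟨h, h0, hhi, hane, ?_⟩
    funext y
    show b.1.1.1 y = a.1.1.1 (Equiv.swap 0 h y)
    rcases eq_or_ne (v0.1.1 y) jv with hc | hc
    · have hy0 : y ≠ 0 := by
        intro hcc
        apply Ne.symm v0.2
        rw [← hcc]
        exact hc
      have hyh : y ≠ h := by
        intro hcc
        apply hv0h
        rw [← hcc]
        exact hc
      rw [Equiv.swap_apply_of_ne_of_ne hy0 hyh]
      rw [(b.2 y).mpr hc, (a.2 y).mpr hc]
    · set x := e.symm ⟨y, hc⟩ with hx
      have hex : (e x).1 = y := by rw [hx, Equiv.apply_symm_apply]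
      have hfx := congrFun hfeq x
      simp only [Function.comp_apply] at hfx
      rw [phiv b x, phiv a (Equiv.swap 0 h' x)] at hfx
      have h2 := congrArg d hfx
      simp only [Equiv.apply_symm_apply] at h2
      have hval := congrArg Subtype.val h2
      have hsw : (Equiv.swap 0 h) y = ((e (Equiv.swap 0 h' x)) : Fin (k * l)) := by
        rw [hh, ← hex]
        exact posEquiv_swap hk v0 h' x hne'
      rw [hsw, ← hex]
      exact hval


/-- The isomorphism between the induced graph on `Tset v0` and `ST^l_{k-1}`. -/
noncomputable def tsetIso (hk : 3 ≤ k) (hi : i ≠ 0) (v0 : Vset k l i) :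
    ((Gdel k l i).induce (Tset v0)) ≃g STGraph (k - 1) l where
  toEquiv := tsetEquiv hk v0
  map_rel_iff' := by
    intro a b
    exact (tsetEquiv_adj hk hi v0 a b).symm

lemma supp_eq_Tset (hk : 3 ≤ k) (hi : i ≠ 0) (v0 : Vset k l i) :
    ((Gdel k l i).connectedComponentMk v0).supp = Tset v0 := by
  apply Set.Subset.antisymm (supp_subset_Tset hi v0)
  intro u hu
  rw [SimpleGraph.ConnectedComponent.mem_supp_iff]
  apply SimpleGraph.ConnectedComponent.sound
  have hreach : (STGraph (k - 1) l).Reachable ((tsetIso hk hi v0) ⟨u, hu⟩)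
      ((tsetIso hk hi v0) ⟨v0, v0_mem_Tset v0⟩) := st_preconnected _ _
  have h2 := hreach.map (tsetIso hk hi v0).symm.toHom
  have e1 : (tsetIso hk hi v0).symm.toHom ((tsetIso hk hi v0) ⟨u, hu⟩) = ⟨u, hu⟩ :=
    (tsetEquiv hk v0).symm_apply_apply _
  have e2 : (tsetIso hk hi v0).symm.toHom ((tsetIso hk hi v0) ⟨v0, v0_mem_Tset v0⟩) =
      ⟨v0, v0_mem_Tset v0⟩ :=
    (tsetEquiv hk v0).symm_apply_apply _
  rw [e1, e2] at h2
  have hreach3 := h2.map (SimpleGraph.Embedding.induce (Tset v0)).toHom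
  exact hreach3

lemma component_iso (hk : 3 ≤ k) (hi : i ≠ 0) (c : (Gdel k l i).ConnectedComponent) :
    Nonempty ((Gdel k l i).induce c.supp ≃g STGraph (k - 1) l) := by
  obtain ⟨v0, rfl⟩ := c.exists_rep
  exact ⟨RelIso.trans
    { toEquiv := Equiv.setCongr (supp_eq_Tset hk hi v0), map_rel_iff' := Iff.rfl }
    (tsetIso hk hi v0)⟩

end Component

end Main

end STAux

/-- for `ℓ ≥ 2`, `k ≥ 3` and a position `i ≠ 0`, every connected
component of the graph obtained from `ST^ℓ_k` by deleting the vertices of `Σ_i` and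
the edges of `E_i` is isomorphic to `ST^ℓ_{k-1}`. -/


theorem ST_delete_components_iso (k l : ℕ) (hl : 2 ≤ l) (hk : 3 ≤ k) :
    letI : NeZero (k * l) := ⟨Nat.mul_ne_zero (by omega) (by omega)⟩
    letI : NeZero ((k - 1) * l) := ⟨Nat.mul_ne_zero (by omega) (by omega)⟩
    ∀ i : Fin (k * l), i ≠ 0 →
      let E : Set (Sym2 (LSetPerm k l)) :=
        {e | ∃ v w : LSetPerm k l, e = s(v, w) ∧ v.1 i ≠ v.1 0 ∧
          w.1 = v.1 ∘ Equiv.swap 0 i}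
      let G := ((STGraph k l).deleteEdges E).induce {v : LSetPerm k l | v.1 i ≠ v.1 0}
      ∀ c : G.ConnectedComponent, Nonempty (G.induce c.supp ≃g STGraph (k - 1) l) := by
  haveI : NeZero (k * l) := ⟨Nat.mul_ne_zero (by omega) (by omega)⟩
  haveI : NeZero ((k - 1) * l) := ⟨Nat.mul_ne_zero (by omega) (by omega)⟩
  intro i hi E G c
  exact STAux.component_iso hk hi c
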